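/- arXiv:2201.04208 — 8 statements merged into one kernel-verified Lean document; each statement's English description precedes it below -/
import Mathlib

section
/- Let U₂ : ℝ → ℝ satisfy X = -U₂(X) - U₂(X)^5 for all X. Then U₂ is differentiable and satisfies the self-similar Burgers equation -¼ U₂(X) + (U₂(X) + (5/4) X) · U₂'(X) = 0 for all X ∈ ℝ. -/
lemma F_strictMono : StrictMono (fun u : ℝ => u + u ^ 5) := by
  have h5 : StrictMono (fun u : ℝ => u ^ 5) := Odd.strictMono_pow ⟨2, by norm_num⟩
  intro a b hab
  simpa using add_lt_add hab (h5 hab)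

lemma F_surj : Function.Surjective (fun u : ℝ => u + u ^ 5) := by
  have hc : Continuous (fun u : ℝ => u + u ^ 5) := by continuity
  have htop : Filter.Tendsto (fun u : ℝ => u + u ^ 5) Filter.atTop Filter.atTop :=
    Filter.Tendsto.atTop_add_atTop Filter.tendsto_id (Filter.tendsto_pow_atTop (by norm_num : (5:ℕ) ≠ 0))
  refine hc.surjective htop ?_
  have : (fun u : ℝ => u + u ^ 5) = (fun y : ℝ => -y) ∘ (fun u : ℝ => u + u ^ 5) ∘ (fun x : ℝ => -x) := by
    funext x; simp; ring
  rw [this]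
  exact (Filter.tendsto_neg_atTop_atBot.comp (htop.comp Filter.tendsto_neg_atBot_atTop))

/-- If `U₂` satisfies `X = -U₂ X - (U₂ X)^5` for all `X`, then `U₂` is
differentiable and satisfies `-(1/4) U₂ X + (U₂ X + (5/4) X) * U₂' X = 0` for all `X`. -/
theorem stmt_1 (U₂ : ℝ → ℝ)
    (himp : ∀ X : ℝ, X = -U₂ X - (U₂ X) ^ 5) :
    Differentiable ℝ U₂ ∧
      ∀ X : ℝ, -(1 / 4) * U₂ X + (U₂ X + (5 / 4) * X) * deriv U₂ X = 0 := by
  -- continuity of U₂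
  set φ := StrictMono.orderIsoOfSurjective _ F_strictMono F_surj with hφ
  have hU : ∀ X : ℝ, U₂ X = φ.symm (-X) := by
    intro X
    have : φ (U₂ X) = -X := by
      have h := himp X
      simp [hφ, StrictMono.coe_orderIsoOfSurjective]
      linarith
    simpa using congrArg φ.symm this
  have hcont : Continuous U₂ := by
    rw [funext hU]
    exact (OrderIso.continuous φ.symm).comp continuous_neg
  -- derivative
  have hder : ∀ X : ℝ, HasDerivAt U₂ (-(1 + 5 * (U₂ X) ^ 4))⁻¹ X := by
    intro X
    have hf : HasDerivAt (fun u : ℝ => -u - u ^ 5) (-(1 + 5 * (U₂ X) ^ 4)) (U₂ X) := by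
      have h1 := (hasDerivAt_id (U₂ X)).neg.sub (hasDerivAt_pow 5 (U₂ X))
      refine h1.congr_deriv ?_
      norm_num
      ring
    have hpos : (0:ℝ) < 1 + 5 * (U₂ X) ^ 4 := by positivity
    have hne : (-(1 + 5 * (U₂ X) ^ 4)) ≠ 0 := neg_ne_zero.mpr hpos.ne'
    exact HasDerivAt.of_local_left_inverse hcont.continuousAt hf hne
      (Filter.Eventually.of_forall fun y => (himp y).symm)
  constructor
  · exact fun X => (hder X).differentiableAt
  · intro X
    rw [(hder X).deriv]
    have hne : (1 + 5 * (U₂ X) ^ 4) ≠ 0 := by positivity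
    have hX := himp X
    have hne' : (-(1 + 5 * (U₂ X) ^ 4)) ≠ 0 := neg_ne_zero.mpr hne
    have key : U₂ X + 5 / 4 * X = 1 / 4 * U₂ X * (-(1 + 5 * (U₂ X) ^ 4)) := by
      linear_combination (5/4 : ℝ) * hX
    rw [key, mul_inv_cancel_right₀ hne']
    ring
end

section
/- Let U₂ : ℝ → ℝ satisfy X = -U₂(X) - U₂(X)^5. Then for all X ∈ ℝ, |U₂(X)| ≤ (1 + X^4)^(1/20). -/
/-! Writing `X = -u - u⁵` with `u = U₂ X`, we have `X⁴ = u⁴ (1 + u⁴)⁴ ≥ u⁴ (u⁴)⁴ = u²⁰`,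
so `|u|²⁰ ≤ X⁴ ≤ 1 + X⁴`; taking twentieth roots gives the bound. -/

theorem pow_twenty_le_add_pow_five_pow_four (u : ℝ) : u ^ 20 ≤ (u + u ^ 5) ^ 4 := by
  have hbase : (u ^ 4) ^ 4 ≤ (1 + u ^ 4) ^ 4 :=
    pow_le_pow_left₀ (by positivity) (by linarith) 4
  calc u ^ 20 = u ^ 4 * (u ^ 4) ^ 4 := by ring
    _ ≤ u ^ 4 * (1 + u ^ 4) ^ 4 := by gcongr
    _ = (u + u ^ 5) ^ 4 := by ring

/-- If `X = -U₂ X - (U₂ X)^5` for all `X`, then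
`|U₂ X| ≤ (1 + X^4)^(1/20)` for all `X`. -/
theorem stmt_4 (U₂ : ℝ → ℝ)
    (himp : ∀ X : ℝ, X = -U₂ X - (U₂ X) ^ 5) :
    ∀ X : ℝ, |U₂ X| ≤ (1 + X ^ 4) ^ ((1 : ℝ) / 20) := by
  intro X
  have hX := himp X
  generalize U₂ X = u at hX ⊢
  subst hX
  have hpow : |u| ^ (20 : ℝ) ≤ 1 + (-u - u ^ 5) ^ 4 := by
    have hneg : (-u - u ^ 5) ^ 4 = (u + u ^ 5) ^ 4 := by ring
    rw [Real.rpow_ofNat, (by decide : Even 20).pow_abs, hneg]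
    linarith [pow_twenty_le_add_pow_five_pow_four u]
  rwa [one_div, Real.le_rpow_inv_iff_of_pos (abs_nonneg u) (by positivity) (by norm_num)]
end

section
/- Let U₂ : ℝ → ℝ satisfy X = -U₂(X) - U₂(X)^5. Then for all X ∈ ℝ, |U₂'(X)| ≤ (1 + X^4)^(-1/5). -/
/-- If `X = -U₂ X - (U₂ X)^5` for all `X`, then
`|U₂' X| ≤ (1 + X^4)^(-1/5)` for all `X`. -/
theorem stmt_5 (U₂ : ℝ → ℝ)
    (himp : ∀ X : ℝ, X = -U₂ X - (U₂ X) ^ 5) :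
    ∀ X : ℝ, |deriv U₂ X| ≤ (1 + X ^ 4) ^ (-(1 : ℝ) / 5) := by
  set g : ℝ → ℝ := fun u => u + u ^ 5 with hgdef
  have hgmono : StrictMono g := by
    have h5 : StrictMono fun a : ℝ => a ^ 5 := Odd.strictMono_pow (by decide)
    exact strictMono_id.add h5
  have hgU : ∀ X, g (U₂ X) = -X := by
    intro X
    have := himp X
    simp only [hgdef]
    linarith
  have hgsurj : Function.Surjective g := fun y => ⟨U₂ (-y), by rw [hgU]; ring⟩
  set e := StrictMono.orderIsoOfSurjective g hgmono hgsurj with hedef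
  have hUeq : ∀ y, U₂ y = e.symm (-y) := by
    intro y
    have h1 : e (U₂ y) = -y := hgU y
    calc U₂ y = e.symm (e (U₂ y)) := (e.symm_apply_apply _).symm
    _ = e.symm (-y) := by rw [h1]
  intro X
  have hcont : ContinuousAt U₂ X := by
    have : Continuous fun y => e.symm (-y) := e.symm.continuous.comp continuous_neg
    have hU : U₂ = fun y => e.symm (-y) := funext hUeq
    rw [hU]
    exact this.continuousAt
  set u := U₂ X with hu
  have hderf : HasDerivAt (fun x : ℝ => -x - x ^ 5) (-1 - 5 * u ^ 4) u := by
    have h1 : HasDerivAt (fun x : ℝ => x ^ 5) (5 * u ^ 4) u := by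
      simpa using hasDerivAt_pow 5 u
    exact (hasDerivAt_id' u).neg.sub h1
  have hne : (-1 - 5 * u ^ 4 : ℝ) ≠ 0 := by nlinarith [pow_nonneg (sq_nonneg u) 2, sq_nonneg (u ^ 2)]
  have hfg : ∀ᶠ y in nhds X, (fun x : ℝ => -x - x ^ 5) (U₂ y) = y :=
    Filter.Eventually.of_forall fun y => (himp y).symm
  have hderU : HasDerivAt U₂ (-1 - 5 * u ^ 4)⁻¹ X :=
    HasDerivAt.of_local_left_inverse hcont hderf hne hfg
  rw [hderU.deriv]
  have hupos : (0 : ℝ) < 1 + 5 * u ^ 4 := by positivity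
  have habs : |(-1 - 5 * u ^ 4 : ℝ)⁻¹| = (1 + 5 * u ^ 4)⁻¹ := by
    rw [abs_inv, abs_of_neg (by linarith)]
    ring_nf
  rw [habs]
  -- key polynomial inequality
  have hX : X = -(u + u ^ 5) := by have := himp X; linarith
  have hkey : 1 + X ^ 4 ≤ (1 + 5 * u ^ 4) ^ 5 := by
    have ht : (0 : ℝ) ≤ u ^ 4 := by positivity
    have : X ^ 4 = u ^ 4 * (1 + u ^ 4) ^ 4 := by rw [hX]; ring
    rw [this]
    nlinarith [pow_nonneg ht 2, pow_nonneg ht 3, pow_nonneg ht 4, pow_nonneg ht 5, ht]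
  have hXpos : (0 : ℝ) < 1 + X ^ 4 := by positivity
  have hr : (1 + X ^ 4) ^ ((1 : ℝ) / 5) ≤ 1 + 5 * u ^ 4 := by
    have h1 : (1 + X ^ 4) ^ ((1 : ℝ) / 5) ≤ ((1 + 5 * u ^ 4) ^ (5 : ℕ) : ℝ) ^ ((1 : ℝ) / 5) :=
      Real.rpow_le_rpow (le_of_lt hXpos) hkey (by norm_num)
    have h2 : ((1 + 5 * u ^ 4) ^ (5 : ℕ) : ℝ) ^ ((1 : ℝ) / 5) = 1 + 5 * u ^ 4 := by
      rw [← Real.rpow_natCast (1 + 5 * u ^ 4) 5, ← Real.rpow_mul (le_of_lt hupos)]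
      norm_num
    rwa [h2] at h1
  have hfin : (1 + X ^ 4) ^ (-(1 : ℝ) / 5) = ((1 + X ^ 4) ^ ((1 : ℝ) / 5))⁻¹ := by
    rw [← Real.rpow_neg (le_of_lt hXpos)]
    norm_num
  rw [hfin]
  exact inv_anti₀ (Real.rpow_pos_of_pos hXpos _) hr
end

section
/- Let U₂ : ℝ → ℝ satisfy X = -U₂(X) - U₂(X)^5. Then for every l with 0 < l < 0.2 and every X with |X| ≥ l, one has 0 > U₂'(X) ≥ -(1 - 2 l^4)(1 + X^4)^(-1/5). -/
open Real

/-- If `X = -U₂ X - (U₂ X)^5` for all `X`, then for every `0 < l < 0.2`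
and every `X` with `|X| ≥ l`, one has `0 > U₂' X ≥ -(1 - 2 l^4)(1 + X^4)^(-1/5)`. -/
theorem stmt_6 (U₂ : ℝ → ℝ)
    (himp : ∀ X : ℝ, X = -U₂ X - (U₂ X) ^ 5) :
    ∀ l : ℝ, 0 < l → l < 0.2 →
      ∀ X : ℝ, l ≤ |X| →
        deriv U₂ X < 0 ∧
          -(1 - 2 * l ^ 4) * (1 + X ^ 4) ^ (-(1 : ℝ) / 5) ≤ deriv U₂ X := by
  have hmono : StrictMono (fun v : ℝ => v + v ^ 5) := by
    have h1 : StrictMono (fun v : ℝ => v ^ 5) := Odd.strictMono_pow ⟨2, by norm_num⟩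
    exact fun a b hab => add_lt_add hab (h1 hab)
  have hsurj : Function.Surjective (fun v : ℝ => v + v ^ 5) := by
    intro y
    refine ⟨U₂ (-y), ?_⟩
    have := himp (-y)
    simp only
    linarith
  set iso := StrictMono.orderIsoOfSurjective _ hmono hsurj with hiso
  have hU₂ : U₂ = fun X => iso.symm (-X) := by
    funext y
    have h1 : U₂ y + U₂ y ^ 5 = -y := by
      have := himp y; linarith
    have h2 := StrictMono.orderIsoOfSurjective_symm_apply_self
      (fun v : ℝ => v + v ^ 5) hmono hsurj (U₂ y)
    rw [h1] at h2
    exact h2.symm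
  have hcont : Continuous U₂ := by
    rw [hU₂]
    exact (iso.symm.continuous).comp continuous_neg
  intro l hl hl2 X hX
  set u := U₂ X with hu
  have hXu : X = -u - u ^ 5 := himp X
  have hpos : (0:ℝ) < 1 + 5 * u ^ 4 := by positivity
  have hderiv : HasDerivAt U₂ (-(1 + 5 * u ^ 4))⁻¹ X := by
    have hf : HasDerivAt (fun v : ℝ => -v - v ^ 5) (-(1 + 5 * u ^ 4)) u := by
      have h0 : HasDerivAt (fun v : ℝ => -v - v ^ 5)
          (-1 - (5 : ℕ) * u ^ (5 - 1)) u :=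
        (hasDerivAt_id u).neg.sub (hasDerivAt_pow 5 u)
      convert h0 using 1
      norm_num; ring
    exact HasDerivAt.of_local_left_inverse hcont.continuousAt hf
      (by linarith) (Filter.Eventually.of_forall fun y => (himp y).symm)
  have hd := hderiv.deriv
  -- key inequality
  have habs : l ≤ |u| * (1 + u ^ 4) := by
    have : |X| = |u| * (1 + u ^ 4) := by
      have : X = -(u * (1 + u ^ 4)) := by rw [hXu]; ring
      rw [this, abs_neg, abs_mul, abs_of_pos (by positivity : (0:ℝ) < 1 + u ^ 4)]
    linarith [hX, this]
  have hu4 : |u| ^ 4 = u ^ 4 := by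
    rw [← abs_pow, abs_of_nonneg (by positivity : (0:ℝ) ≤ u ^ 4)]
  have hl4 : l ^ 4 < 0.0016 := by
    have := pow_lt_pow_left₀ hl2 hl.le (n := 4) (by norm_num)
    norm_num at this
    linarith
  have ha : (0:ℝ) ≤ |u| := abs_nonneg u
  -- l ≤ |u| * (1 + l^4)
  have hl4pos : (0:ℝ) < l ^ 4 := by positivity
  have hkey : l ≤ |u| * (1 + l ^ 4) := by
    rcases le_or_gt l (|u|) with h | h
    · nlinarith [mul_nonneg ha hl4pos.le]
    · have h4 : |u| ^ 4 ≤ l ^ 4 := pow_le_pow_left₀ ha h.le 4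
      have h5 : |u| ^ 5 ≤ |u| * l ^ 4 := by
        calc |u| ^ 5 = |u| * |u| ^ 4 := by ring
          _ ≤ |u| * l ^ 4 := mul_le_mul_of_nonneg_left h4 ha
      have h6 : l ≤ |u| + |u| ^ 5 := by nlinarith [hu4]
      linarith
  have hb : l ^ 4 ≤ u ^ 4 * (1 + l ^ 4) ^ 4 := by
    have := pow_le_pow_left₀ hl.le hkey 4
    calc l ^ 4 ≤ (|u| * (1 + l ^ 4)) ^ 4 := this
      _ = u ^ 4 * (1 + l ^ 4) ^ 4 := by rw [mul_pow, hu4]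
  have hbnn : (0:ℝ) ≤ u ^ 4 := by positivity
  have haux : 2 * (1 + l ^ 4) ^ 4 + 10 * l ^ 4 ≤ 4 := by
    have hm1 : l ^ 4 ≤ 1 := by linarith
    have hm2 : l ^ 4 * l ^ 4 ≤ l ^ 4 := by nlinarith
    have hm3 : l ^ 4 * l ^ 4 * l ^ 4 ≤ l ^ 4 := by nlinarith
    have hm4 : l ^ 4 * l ^ 4 * l ^ 4 * l ^ 4 ≤ l ^ 4 := by nlinarith
    nlinarith
  have hkey2 : 2 * l ^ 4 * (1 + 5 * u ^ 4) ≤ 4 * u ^ 4 := by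
    have h2 : 0 ≤ u ^ 4 * (4 - (2 * (1 + l ^ 4) ^ 4 + 10 * l ^ 4)) :=
      mul_nonneg hbnn (by linarith)
    nlinarith [hb, h2]
  have hMpos : (0:ℝ) < (1 - 2 * l ^ 4) * (1 + 5 * u ^ 4) := by nlinarith
  have hM : 1 + u ^ 4 ≤ (1 - 2 * l ^ 4) * (1 + 5 * u ^ 4) := by nlinarith
  have h1X : 1 + X ^ 4 ≤ ((1 - 2 * l ^ 4) * (1 + 5 * u ^ 4)) ^ 5 := by
    have hx4 : X ^ 4 = u ^ 4 * (1 + u ^ 4) ^ 4 := by rw [hXu]; ring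
    have h1 : 1 + X ^ 4 ≤ (1 + u ^ 4) ^ 5 := by
      rw [hx4]; nlinarith [pow_nonneg (by positivity : (0:ℝ) ≤ u^4) 4, sq_nonneg (u^4)]
    have h2 : (1 + u ^ 4) ^ 5 ≤ ((1 - 2 * l ^ 4) * (1 + 5 * u ^ 4)) ^ 5 :=
      pow_le_pow_left₀ (by positivity) hM 5
    linarith
  set M := (1 - 2 * l ^ 4) * (1 + 5 * u ^ 4) with hMdef
  have hXpos : (0:ℝ) < 1 + X ^ 4 := by positivity
  have hrpow : (1 + X ^ 4) ^ ((1:ℝ) / 5) ≤ M := by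
    calc (1 + X ^ 4) ^ ((1:ℝ) / 5) ≤ (M ^ 5 : ℝ) ^ ((1:ℝ) / 5) :=
          Real.rpow_le_rpow hXpos.le h1X (by norm_num)
      _ = M := by
          rw [← Real.rpow_natCast M 5, ← Real.rpow_mul hMpos.le]
          norm_num
  have hP : (0:ℝ) < (1 + X ^ 4) ^ ((1:ℝ) / 5) := Real.rpow_pos_of_pos hXpos _
  constructor
  · rw [hd]
    exact inv_lt_zero.mpr (by linarith)
  · rw [hd]
    have hneg : (-(1 : ℝ)) / 5 = -((1:ℝ)/5) := by norm_num
    rw [hneg, Real.rpow_neg hXpos.le, inv_neg, neg_mul, neg_le_neg_iff]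
    rw [← div_eq_mul_inv, inv_eq_one_div, div_le_div_iff₀ hpos hP]
    rw [hMdef] at hrpow
    linarith [hrpow]
end

section
/- Let U₂ : ℝ → ℝ satisfy X = -U₂(X) - U₂(X)^5. Then for all |X| ≥ 100, -(7/40)(1 + X^4)^(-1/5) > U₂'(X) > -(9/40)(1 + X^4)^(-1/5). -/
/-- If `X = -U₂ X - (U₂ X)^5` for all `X`, then for all `|X| ≥ 100`,
`-(7/40)(1 + X^4)^(-1/5) > U₂' X > -(9/40)(1 + X^4)^(-1/5)`. -/
theorem stmt_7 (U₂ : ℝ → ℝ)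
    (himp : ∀ X : ℝ, X = -U₂ X - (U₂ X) ^ 5) :
    ∀ X : ℝ, 100 ≤ |X| →
      deriv U₂ X < -(7 / 40) * (1 + X ^ 4) ^ (-(1 : ℝ) / 5) ∧
        -(9 / 40) * (1 + X ^ 4) ^ (-(1 : ℝ) / 5) < deriv U₂ X := by
  have hmono5 : ∀ a b : ℝ, a < b → a + a^5 < b + b^5 := by
    intro a b hab
    nlinarith [mul_nonneg (sub_nonneg.2 hab.le) (sq_nonneg (a+b)),
      mul_nonneg (sub_nonneg.2 hab.le) (sq_nonneg (a-b)),
      mul_nonneg (sub_nonneg.2 hab.le) (sq_nonneg (a^2-b^2)),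
      mul_nonneg (sub_nonneg.2 hab.le) (sq_nonneg (a^2+b^2)),
      mul_nonneg (sub_nonneg.2 hab.le) (sq_nonneg (a*b))]
  have hanti : StrictAnti U₂ := by
    intro x y hxy
    by_contra h
    push_neg at h
    have h1 := himp x
    have h2 := himp y
    rcases eq_or_lt_of_le h with he | hlt
    · rw [← he] at h2; linarith
    · have := hmono5 _ _ hlt; linarith
  have hsurj : Function.Surjective U₂ := by
    intro u
    refine ⟨-u - u^5, ?_⟩
    have h := himp (-u - u^5)
    set v := U₂ (-u - u^5) with hv
    by_contra hne
    rcases lt_or_gt_of_ne hne with hlt | hlt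
    · have := hmono5 _ _ hlt; linarith
    · have := hmono5 _ _ hlt; linarith
  have hcont : Continuous U₂ := by
    have hmono : StrictMono (fun x => -U₂ x) := fun a b hab => neg_lt_neg (hanti hab)
    have hs2 : Function.Surjective (fun x => -U₂ x) := by
      intro u
      obtain ⟨x, hx⟩ := hsurj (-u)
      exact ⟨x, by simp [hx]⟩
    have h2 : Continuous (fun x => -U₂ x) :=
      (StrictMono.orderIsoOfSurjective _ hmono hs2).continuous
    convert h2.neg using 1
    funext x
    simp
  intro X hX
  set u := U₂ X with hu
  have hf : HasDerivAt (fun v : ℝ => -v - v^5) (-1 - 5*u^4) u := by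
    have h1 : HasDerivAt (fun v : ℝ => -v) (-1) u := (hasDerivAt_id u).neg
    have h2 : HasDerivAt (fun v : ℝ => v^5) (5*u^4) u := by
      simpa using hasDerivAt_pow 5 u
    exact h1.sub h2
  have hu4 : (0:ℝ) ≤ u^4 := by positivity
  have hne : (-1 - 5*u^4 : ℝ) ≠ 0 := by intro hc; nlinarith
  have hder : HasDerivAt U₂ (-1 - 5*u^4)⁻¹ X := by
    apply HasDerivAt.of_local_left_inverse hcont.continuousAt hf hne
    filter_upwards with y
    exact (himp y).symm
  have hderiv : deriv U₂ X = (-1 - 5*u^4)⁻¹ := hder.deriv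
  set s := u^4 with hsdef
  have hs0 : (0:ℝ) ≤ s := hu4
  have hXu : X = -u - u^5 := himp X
  have hX2 : (10000:ℝ) ≤ X^2 := by nlinarith [sq_abs X]
  have hXsq : X^2 = u^2*(1+u^4)^2 := by rw [hXu]; ring
  have hs33 : (33:ℝ) ≤ s := by
    by_contra h
    push_neg at h
    have ht : (0:ℝ) ≤ u^2 := sq_nonneg u
    have ht6 : u^2 ≤ 6 := by nlinarith
    nlinarith [mul_le_mul_of_nonneg_right ht6 (sq_nonneg (1+u^4))]
  have hX4 : X^4 = s*(1+s)^4 := by rw [hXu, hsdef]; ring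
  have hA : (0:ℝ) < 1 + X^4 := by positivity
  set B := (1 + X^4) ^ ((1:ℝ)/5) with hB
  have hBpos : 0 < B := Real.rpow_pos_of_pos hA _
  have hB5 : B^5 = 1 + X^4 := by
    rw [hB, ← Real.rpow_natCast ((1+X^4)^((1:ℝ)/5)) 5, ← Real.rpow_mul hA.le]
    norm_num
  have hBneg : (1 + X^4) ^ (-(1:ℝ)/5) = B⁻¹ := by
    rw [neg_div, Real.rpow_neg hA.le, hB]
  have h1s : (0:ℝ) < 1 + 5*s := by linarith
  have h33 : (0:ℝ) ≤ s - 33 := by linarith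
  have key1 : 7*(1+5*s) < 40*B := by
    apply lt_of_pow_lt_pow_left₀ 5 (by positivity)
    have h40 : (40*B)^5 = 102400000*(1+X^4) := by rw [mul_pow, hB5]; norm_num
    rw [h40, hX4]
    nlinarith [pow_nonneg hs0 2, pow_nonneg hs0 3, pow_nonneg hs0 4, pow_nonneg hs0 5]
  have key2 : 40*B < 9*(1+5*s) := by
    apply lt_of_pow_lt_pow_left₀ 5 (by positivity)
    have h40 : (40*B)^5 = 102400000*(1+X^4) := by rw [mul_pow, hB5]; norm_num
    rw [h40, hX4]
    nlinarith [pow_nonneg h33 2, pow_nonneg h33 3, pow_nonneg h33 4, pow_nonneg h33 5]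
  rw [hderiv, hBneg]
  have hd : (-1 - 5*u^4)⁻¹ = -(1+5*s)⁻¹ := by
    rw [← hsdef]
    rw [show (-1 - 5*s : ℝ) = -(1+5*s) by ring, inv_neg]
  rw [hd]
  have hBinv : (0:ℝ) < B⁻¹ := by positivity
  clear_value B s u
  have hBB : B⁻¹ * B = 1 := inv_mul_cancel₀ hBpos.ne'
  have hss : (1+5*s)⁻¹ * (1+5*s) = 1 := inv_mul_cancel₀ h1s.ne'
  constructor
  · have heq1 : B⁻¹ * (1+5*s)⁻¹ * (40*B - 7*(1+5*s)) * (1/40) = (1+5*s)⁻¹ - (7/40)*B⁻¹ := by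
      linear_combination (1+5*s)⁻¹ * hBB - 7/40*B⁻¹ * hss
    have h0 : 0 < (1+5*s)⁻¹ - (7/40)*B⁻¹ := by
      rw [← heq1]
      exact mul_pos (mul_pos (mul_pos hBinv (inv_pos.2 h1s)) (by linarith)) (by norm_num)
    linarith
  · have heq2 : B⁻¹ * (1+5*s)⁻¹ * (9*(1+5*s) - 40*B) * (1/40) = (9/40)*B⁻¹ - (1+5*s)⁻¹ := by
      linear_combination 9/40*B⁻¹ * hss - (1+5*s)⁻¹ * hBB
    have h0 : 0 < (9/40)*B⁻¹ - (1+5*s)⁻¹ := by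
      rw [← heq2]
      exact mul_pos (mul_pos (mul_pos hBinv (inv_pos.2 h1s)) (by linarith)) (by norm_num)
    linarith
end

section
/- Let U₂ : ℝ → ℝ satisfy X = -U₂(X) - U₂(X)^5. Then as X → +∞, U₂(X) = -X^(1/5) + (1/5) X^(-3/5) + O(X^(-7/5)); more precisely, there exist C, X₀ > 0 such that |U₂(X) + X^(1/5) - (1/5) X^(-3/5)| ≤ C X^(-7/5) for all X ≥ X₀. -/
/-!
Put `y = X ^ (1/5)`; then `v = -U₂ X` solves `v + v ^ 5 = y ^ 5`. As `v ↦ v + v ^ 5` is strictly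
increasing, it suffices to see that `y - y⁻³/5 - y⁻⁷` and `y - y⁻³/5 + y⁻⁷` are mapped below and
above `y ^ 5`. Expanding, each difference is `y⁻³` times a polynomial in `y⁻⁴` whose constant
term (`-24/5`, resp. `26/5`) dominates once `y ≥ 2`.
-/

open Real

lemma strictMono_add_pow_five : StrictMono fun v : ℝ => v + v ^ 5 :=
  strictMono_id.add (Odd.strictMono_pow (by decide))

lemma add_pow_five_le_of_sub_pow_seven (z : ℝ) (hz : 0 < z) (hz2 : z ≤ 1 / 2) :
    (z⁻¹ - z ^ 3 / 5 - z ^ 7) + (z⁻¹ - z ^ 3 / 5 - z ^ 7) ^ 5 ≤ z⁻¹ ^ 5 := by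
  set w := z ^ 4 with hw
  have hw0 : 0 ≤ w := by positivity
  have hw1 : w ≤ 1 / 16 :=
    (pow_le_pow_left₀ hz.le hz2 4).trans_eq (by norm_num)
  have hQ : -24/5 + 73/25*w + 1101/125*w^2 - 18251/3125*w^3 - 1101/125*w^4
      + 98/25*w^5 + 23/5*w^6 - w^7 - w^8 ≤ 0 := by
    have hpow (n : ℕ) (hn : n ≠ 0) : w ^ n ≤ w := pow_le_of_le_one hw0 (by linarith) hn
    nlinarith [hpow 2 (by norm_num), hpow 5 (by norm_num), hpow 6 (by norm_num),
      pow_nonneg hw0 3, pow_nonneg hw0 4, pow_nonneg hw0 7, pow_nonneg hw0 8]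
  have hfac : (z⁻¹ - z ^ 3 / 5 - z ^ 7) + (z⁻¹ - z ^ 3 / 5 - z ^ 7) ^ 5 - z⁻¹ ^ 5
      = z ^ 3 * (-24/5 + 73/25*w + 1101/125*w^2 - 18251/3125*w^3 - 1101/125*w^4
      + 98/25*w^5 + 23/5*w^6 - w^7 - w^8) := by
    rw [hw]; field_simp; ring
  nlinarith [mul_nonpos_of_nonneg_of_nonpos (by positivity : (0:ℝ) ≤ z ^ 3) hQ]

lemma le_add_pow_five_of_add_pow_seven (z : ℝ) (hz : 0 < z) (hz2 : z ≤ 1 / 2) :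
    z⁻¹ ^ 5 ≤ (z⁻¹ - z ^ 3 / 5 + z ^ 7) + (z⁻¹ - z ^ 3 / 5 + z ^ 7) ^ 5 := by
  set w := z ^ 4 with hw
  have hw0 : 0 ≤ w := by positivity
  have hw1 : w ≤ 1 / 16 :=
    (pow_le_pow_left₀ hz.le hz2 4).trans_eq (by norm_num)
  have hQ : 0 ≤ 26/5 - 77/25*w + 1401/125*w^2 - 19251/3125*w^3 + 1401/125*w^4
      - 102/25*w^5 + 27/5*w^6 - w^7 + w^8 := by
    have hpow (n : ℕ) (hn : n ≠ 0) : w ^ n ≤ w := pow_le_of_le_one hw0 (by linarith) hn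
    nlinarith [hpow 3 (by norm_num), hpow 5 (by norm_num), hpow 7 (by norm_num),
      pow_nonneg hw0 2, pow_nonneg hw0 4, pow_nonneg hw0 6, pow_nonneg hw0 8]
  have hfac : (z⁻¹ - z ^ 3 / 5 + z ^ 7) + (z⁻¹ - z ^ 3 / 5 + z ^ 7) ^ 5 - z⁻¹ ^ 5
      = z ^ 3 * (26/5 - 77/25*w + 1401/125*w^2 - 19251/3125*w^3 + 1401/125*w^4
      - 102/25*w^5 + 27/5*w^6 - w^7 + w^8) := by
    rw [hw]; field_simp; ring
  nlinarith [mul_nonneg (by positivity : (0:ℝ) ≤ z ^ 3) hQ]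

lemma abs_sub_le_of_add_pow_five_eq_pow_five {v y : ℝ} (hy : 2 ≤ y) (hv : v + v ^ 5 = y ^ 5) :
    |v - (y - y⁻¹ ^ 3 / 5)| ≤ y⁻¹ ^ 7 := by
  have hz : 0 < y⁻¹ := by positivity
  have hz2 : y⁻¹ ≤ 1 / 2 := by rw [one_div]; exact inv_anti₀ (by norm_num) hy
  have hlow := add_pow_five_le_of_sub_pow_seven y⁻¹ hz hz2
  have hupp := le_add_pow_five_of_add_pow_seven y⁻¹ hz hz2
  rw [inv_inv, ← hv] at hlow hupp
  rw [abs_le]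
  constructor
  · linarith [strictMono_add_pow_five.le_iff_le.mp hlow]
  · linarith [strictMono_add_pow_five.le_iff_le.mp hupp]

lemma rpow_neg_natCast_div {X : ℝ} (hX : 0 ≤ X) (n k : ℕ) :
    X ^ (-(n : ℝ) / k) = (X ^ ((1 : ℝ) / k))⁻¹ ^ n := by
  rw [← rpow_natCast, inv_rpow (rpow_nonneg hX _), ← rpow_mul hX, ← rpow_neg hX]
  ring_nf

/-- If `X = -U₂ X - (U₂ X)^5` for all `X`, then as `X → +∞`,
`U₂ X = -X^(1/5) + (1/5) X^(-3/5) + O(X^(-7/5))`: there exist `C, X₀ > 0` with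
`|U₂ X + X^(1/5) - (1/5) X^(-3/5)| ≤ C X^(-7/5)` for all `X ≥ X₀`. -/
theorem stmt_8 (U₂ : ℝ → ℝ)
    (himp : ∀ X : ℝ, X = -U₂ X - (U₂ X) ^ 5) :
    ∃ C X₀ : ℝ, 0 < C ∧ 0 < X₀ ∧
      ∀ X : ℝ, X₀ ≤ X →
        |U₂ X + X ^ ((1 : ℝ) / 5) - (1 / 5) * X ^ (-(3 : ℝ) / 5)| ≤
          C * X ^ (-(7 : ℝ) / 5) := by
  refine ⟨1, 32, one_pos, by norm_num, fun X hX => ?_⟩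
  have hX0 : 0 ≤ X := by linarith
  set y := X ^ ((1 : ℝ) / 5)
  have hy5 : y ^ 5 = X := by
    rw [← rpow_natCast, ← rpow_mul hX0]
    norm_num
  have hy : 2 ≤ y := by
    rw [← pow_le_pow_iff_left₀ (by norm_num) (by positivity) (by norm_num : 5 ≠ 0), hy5]
    norm_num
    linarith
  have hv : -U₂ X + (-U₂ X) ^ 5 = y ^ 5 := by
    rw [hy5]; linear_combination -himp X
  have h3 : X ^ (-(3 : ℝ) / 5) = y⁻¹ ^ 3 := by exact_mod_cast rpow_neg_natCast_div hX0 3 5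
  have h7 : X ^ (-(7 : ℝ) / 5) = y⁻¹ ^ 7 := by exact_mod_cast rpow_neg_natCast_div hX0 7 5
  rw [h3, h7, one_mul, ← abs_neg]
  convert abs_sub_le_of_add_pow_five_eq_pow_five hy hv using 2
  ring
end

section
/- Let U₂ : ℝ → ℝ satisfy X = -U₂(X) - U₂(X)^5. Then U₂ is concave on (-∞, 0] and convex on [0, ∞). -/
/-!
With `g u = -u - u ^ 5` we have `g ∘ U₂ = id`. The map `g` is strictly decreasing, concave on
`[0, ∞)` and convex on `(-∞, 0]`, and `U₂` maps `(-∞, 0]` to `[0, ∞)` and vice versa. A left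
inverse of a strictly decreasing concave (convex) map is concave (convex): the inequality for `g`
at `U₂ x, U₂ y` compares values of `g`, and since `g` reverses order it becomes the inequality
for `U₂` at `x, y`.
-/

open Set

section InverseOfAntitone

variable {𝕜 E β : Type*} [Semiring 𝕜] [PartialOrder 𝕜]
  [AddCommMonoid E] [PartialOrder E] [Module 𝕜 E] [AddCommMonoid β] [LinearOrder β] [Module 𝕜 β]
  {s : Set E} {t : Set β} {f : E → β} {g : β → E}

theorem ConvexOn.convexOn_of_leftInvOn (hg : ConvexOn 𝕜 t g) (hg_anti : StrictAntiOn g t)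
    (hs : Convex 𝕜 s) (hf : MapsTo f s t) (hgf : LeftInvOn g f s) : ConvexOn 𝕜 s f := by
  refine ⟨hs, fun x hx y hy a b ha hb hab => ?_⟩
  have hxy : a • x + b • y ∈ s := hs hx hy ha hb hab
  refine (hg_anti.le_iff_ge (hg.1 (hf hx) (hf hy) ha hb hab) (hf hxy)).1 ?_
  calc g (a • f x + b • f y) ≤ a • g (f x) + b • g (f y) := hg.2 (hf hx) (hf hy) ha hb hab
    _ = g (f (a • x + b • y)) := by rw [hgf hx, hgf hy, hgf hxy]

theorem ConcaveOn.concaveOn_of_leftInvOn (hg : ConcaveOn 𝕜 t g) (hg_anti : StrictAntiOn g t)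
    (hs : Convex 𝕜 s) (hf : MapsTo f s t) (hgf : LeftInvOn g f s) : ConcaveOn 𝕜 s f := by
  refine ⟨hs, fun x hx y hy a b ha hb hab => ?_⟩
  have hxy : a • x + b • y ∈ s := hs hx hy ha hb hab
  refine (hg_anti.le_iff_ge (hf hxy) (hg.1 (hf hx) (hf hy) ha hb hab)).1 ?_
  calc g (f (a • x + b • y)) = a • g (f x) + b • g (f y) := by rw [hgf hx, hgf hy, hgf hxy]
    _ ≤ g (a • f x + b • f y) := hg.2 (hf hx) (hf hy) ha hb hab

end InverseOfAntitone

theorem strictAnti_neg_sub_pow {n : ℕ} (hn : Odd n) : StrictAnti fun u : ℝ => -u - u ^ n :=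
  fun _ _ huv => by have := hn.strictMono_pow huv; linarith

theorem concaveOn_neg_sub_pow (n : ℕ) : ConcaveOn ℝ (Ici 0) fun u : ℝ => -u - u ^ n :=
  (convexOn_id (convex_Ici 0)).neg.sub (convexOn_pow n)

theorem convexOn_neg_sub_pow {n : ℕ} (hn : Odd n) :
    ConvexOn ℝ (Iic 0) fun u : ℝ => -u - u ^ n := by
  have hpow := (convexOn_pow (𝕜 := ℝ) n).comp_affineMap (-LinearMap.id : ℝ →ₗ[ℝ] ℝ).toAffineMap
  have hpre : (-LinearMap.id : ℝ →ₗ[ℝ] ℝ).toAffineMap ⁻¹' Ici 0 = Iic 0 := by ext; simp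
  rw [hpre] at hpow
  refine ((concaveOn_id (convex_Iic 0)).neg.add hpow).congr fun u _ => ?_
  simp [hn.neg_pow, sub_eq_add_neg]

/-- If `X = -U₂ X - (U₂ X)^5` for all `X`, then `U₂` is concave on
`(-∞, 0]` and convex on `[0, ∞)`. -/
theorem stmt_9 (U₂ : ℝ → ℝ)
    (himp : ∀ X : ℝ, X = -U₂ X - (U₂ X) ^ 5) :
    ConcaveOn ℝ (Set.Iic (0 : ℝ)) U₂ ∧ ConvexOn ℝ (Set.Ici (0 : ℝ)) U₂ := by
  set g : ℝ → ℝ := fun u => -u - u ^ 5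
  have hodd : Odd 5 := by decide
  have hg_anti : StrictAnti g := strictAnti_neg_sub_pow hodd
  have hgU (x : ℝ) : g (U₂ x) = x := (himp x).symm
  have hg0 : g 0 = 0 := by norm_num [g]
  have hmaps_Iic : MapsTo U₂ (Iic 0) (Ici 0) := fun x hx => by
    rwa [mem_Ici, ← hg_anti.le_iff_ge, hg0, hgU]
  have hmaps_Ici : MapsTo U₂ (Ici 0) (Iic 0) := fun x hx => by
    rwa [mem_Iic, ← hg_anti.le_iff_ge, hg0, hgU]
  exact ⟨(concaveOn_neg_sub_pow 5).concaveOn_of_leftInvOn (hg_anti.strictAntiOn _) (convex_Iic 0)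
      hmaps_Iic fun x _ => hgU x,
    (convexOn_neg_sub_pow hodd).convexOn_of_leftInvOn (hg_anti.strictAntiOn _) (convex_Ici 0)
      hmaps_Ici fun x _ => hgU x⟩
end

section
/- Define U₂ : ℝ → ℝ by X = -U₂(X) - U₂(X)^5, and for T* ∈ ℝ, x* ∈ ℝ, define u(x,t) := (T* - t)^(1/4) · U₂((x - x*)/(T* - t)^(5/4)) for t < T*. Then u solves the inviscid Burgers equation ∂ₜu + u ∂ₓu = 0 on ℝ × (-∞, T*). -/
/-- With `U₂` defined by `X = -U₂ X - (U₂ X)^5`, the function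
`u(x,t) = (T* - t)^(1/4) · U₂((x - x*)/(T* - t)^(5/4))` solves the inviscid Burgers
equation `∂ₜu + u ∂ₓu = 0` on `ℝ × (-∞, T*)`. -/
theorem stmt_10 (U₂ : ℝ → ℝ)
    (himp : ∀ X : ℝ, X = -U₂ X - (U₂ X) ^ 5)
    (Tstar xstar : ℝ) (u : ℝ → ℝ → ℝ)
    (hu : ∀ x t : ℝ, u x t =
      (Tstar - t) ^ ((1 : ℝ) / 4) * U₂ ((x - xstar) / (Tstar - t) ^ ((5 : ℝ) / 4))) :
    ∀ x t : ℝ, t < Tstar →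
      deriv (fun t' => u x t') t + u x t * deriv (fun x' => u x' t) x = 0 := by
  -- continuity of U₂
  have hg : StrictMono (fun v : ℝ => v + v ^ 5) := by
    have h5 : StrictMono (fun v : ℝ => v ^ 5) := Odd.strictMono_pow (by decide)
    exact fun a b hab => add_lt_add hab (h5 hab)
  have hgsurj : Function.Surjective (fun v : ℝ => v + v ^ 5) := by
    intro y
    refine ⟨U₂ (-y), ?_⟩
    have := himp (-y)
    simp only
    linarith
  set E := StrictMono.orderIsoOfSurjective _ hg hgsurj with hE
  have hU₂eq : U₂ = fun X => E.symm (-X) := by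
    funext X
    have : E (U₂ X) = -X := by
      have := himp X
      simp only [hE, StrictMono.coe_orderIsoOfSurjective]
      linarith
    rw [← this, OrderIso.symm_apply_apply]
  have hcont : Continuous U₂ := by
    rw [hU₂eq]
    exact E.symm.continuous.comp continuous_neg
  have hne : ∀ v : ℝ, (-1 - 5 * v ^ 4 : ℝ) ≠ 0 := by
    intro v
    have h4 : (0:ℝ) ≤ v ^ 4 := by positivity
    nlinarith
  have hDU : ∀ X : ℝ, HasDerivAt U₂ (-1 - 5 * (U₂ X) ^ 4)⁻¹ X := by
    intro X
    have hf : HasDerivAt (fun v : ℝ => -v - v ^ 5) (-1 - 5 * (U₂ X) ^ 4) (U₂ X) := by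
      have := ((hasDerivAt_id (U₂ X)).neg.sub (hasDerivAt_pow 5 (U₂ X)))
      norm_num at this ⊢
      exact this
    exact hf.of_local_left_inverse hcont.continuousAt (hne _)
      (Filter.Eventually.of_forall fun y => (himp y).symm)
  intro x t ht
  set s : ℝ := Tstar - t with hs
  have hspos : (0:ℝ) < s := by simp [hs]; linarith
  set ξ : ℝ := (x - xstar) / s ^ ((5:ℝ)/4) with hξ
  have hQpos : (0:ℝ) < s ^ ((5:ℝ)/4) := Real.rpow_pos_of_pos hspos _
  have hPpos : (0:ℝ) < s ^ ((1:ℝ)/4) := Real.rpow_pos_of_pos hspos _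
  set d : ℝ := (-1 - 5 * (U₂ ξ) ^ 4)⁻¹ with hd
  -- time derivatives
  have hA : HasDerivAt (fun t' : ℝ => Tstar - t') (-1) t := by
    simpa using ((hasDerivAt_id t).const_sub Tstar)
  have h1 : HasDerivAt (fun t' : ℝ => (Tstar - t') ^ ((1:ℝ)/4))
      (((1:ℝ)/4 * s ^ ((1:ℝ)/4 - 1)) * (-1)) t := by
    exact (Real.hasDerivAt_rpow_const (Or.inl hspos.ne')).comp t hA
  have h2 : HasDerivAt (fun t' : ℝ => (Tstar - t') ^ ((5:ℝ)/4))
      (((5:ℝ)/4 * s ^ ((5:ℝ)/4 - 1)) * (-1)) t := by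
    exact (Real.hasDerivAt_rpow_const (Or.inl hspos.ne')).comp t hA
  have h3 : HasDerivAt (fun t' : ℝ => (x - xstar) / (Tstar - t') ^ ((5:ℝ)/4))
      ((0 * s ^ ((5:ℝ)/4) - (x - xstar) * (((5:ℝ)/4 * s ^ ((5:ℝ)/4 - 1)) * (-1))) /
        (s ^ ((5:ℝ)/4)) ^ 2) t := by
    exact (hasDerivAt_const t (x - xstar)).div h2 hQpos.ne'
  have h4 : HasDerivAt (fun t' : ℝ => U₂ ((x - xstar) / (Tstar - t') ^ ((5:ℝ)/4)))
      (d * ((0 * s ^ ((5:ℝ)/4) - (x - xstar) * (((5:ℝ)/4 * s ^ ((5:ℝ)/4 - 1)) * (-1))) /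
        (s ^ ((5:ℝ)/4)) ^ 2)) t := by
    exact (hDU ξ).comp t h3
  have hT : HasDerivAt (fun t' : ℝ => u x t')
      ((((1:ℝ)/4 * s ^ ((1:ℝ)/4 - 1)) * (-1)) * U₂ ξ +
        s ^ ((1:ℝ)/4) * (d * ((0 * s ^ ((5:ℝ)/4) - (x - xstar) *
          (((5:ℝ)/4 * s ^ ((5:ℝ)/4 - 1)) * (-1))) / (s ^ ((5:ℝ)/4)) ^ 2))) t := by
    have := h1.mul h4
    refine HasDerivAt.congr_of_eventuallyEq this ?_
    filter_upwards with t' using (hu x t')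
  -- space derivative
  have hX : HasDerivAt (fun x' : ℝ => u x' t)
      (s ^ ((1:ℝ)/4) * (d * ((1:ℝ) / s ^ ((5:ℝ)/4)))) x := by
    have hin : HasDerivAt (fun x' : ℝ => (x' - xstar) / s ^ ((5:ℝ)/4))
        ((1:ℝ) / s ^ ((5:ℝ)/4)) x := by
      simpa using (((hasDerivAt_id x).sub_const xstar).div_const (s ^ ((5:ℝ)/4)))
    have := (((hDU ξ).comp x hin).const_mul (s ^ ((1:ℝ)/4)))
    refine HasDerivAt.congr_of_eventuallyEq this ?_
    filter_upwards with x' using (hu x' t)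
  rw [hT.deriv, hX.deriv, hu x t]
  -- algebra
  have hkey : d * (-1 - 5 * (U₂ ξ) ^ 4) = 1 := inv_mul_cancel₀ (hne _)
  have hξval : ξ = -U₂ ξ - (U₂ ξ) ^ 5 := himp ξ
  -- rpow relations
  have e1 : s ^ ((1:ℝ)/4 - 1) = s ^ ((1:ℝ)/4) / s := by
    rw [Real.rpow_sub hspos, Real.rpow_one]
  have e2 : s ^ ((5:ℝ)/4 - 1) = s ^ ((1:ℝ)/4) := by norm_num
  have e3 : s ^ ((5:ℝ)/4) = s ^ ((1:ℝ)/4) * s := by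
    rw [show (5:ℝ)/4 = 1/4 + 1 by norm_num, Real.rpow_add hspos, Real.rpow_one]
  rw [e1, e2, e3]
  set P : ℝ := s ^ ((1:ℝ)/4) with hP
  set V : ℝ := U₂ ξ with hV
  have hxx : x - xstar = (-V - V ^ 5) * (P * s) := by
    rw [← hξval, ← e3]
    exact (div_mul_cancel₀ (x - xstar) hQpos.ne').symm
  rw [hxx, hd]
  have hPne : P ≠ 0 := hPpos.ne'
  have hsne : s ≠ 0 := hspos.ne'
  have hVne : (-1 - 5 * V ^ 4 : ℝ) ≠ 0 := hne V
  have hUV : U₂ (-V - V ^ 5) = V := by rw [← hξval]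
  simp only [mul_div_cancel_right₀ _ (mul_ne_zero hPne hsne), hUV]
  have hVne' : (-1 - V ^ 4 * 5 : ℝ) ≠ 0 := by rwa [mul_comm] at hVne
  field_simp
  ring
end
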